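/- Let g : ℝ → ℝ be twice continuously differentiable, let t ∈ ℝ and τ > 0. Then |(3/2)g(t) − (1/2)g(t − τ) − g(t + τ/2)|² ≤ 4τ³ ∫_{t−τ}^{t+τ} |g″(s)|² ds. -/

import Mathlib

/-!
Expand `g` at the midpoint `m = t + τ/2` by Taylor's formula with integral remainder. The
first-order terms cancel since `3/2 (t - m) = 1/2 (t - τ - m)`, and the two remainders have
kernels bounded by `τ/2` and `3τ/2` on `[t - τ, m]`, so the error is at most
`3τ/2 · ∫_{t-τ}^m |g''|`. Cauchy–Schwarz on this interval of length `3τ/2` then gives the bound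
with constant `27/8 ≤ 4`.
-/

open MeasureTheory Set intervalIntegral

theorem sq_intervalIntegral_le {h : ℝ → ℝ} (hh : Continuous h) {a b : ℝ} (hab : a ≤ b) :
    (∫ s in a..b, h s) ^ 2 ≤ (b - a) * ∫ s in a..b, h s ^ 2 := by
  set I := ∫ s in a..b, h s
  have hint : IntervalIntegrable h volume a b := hh.intervalIntegrable a b
  have hint_sq : IntervalIntegrable (fun s => h s ^ 2) volume a b :=
    (hh.pow 2).intervalIntegrable a b
  -- `0 ≤ ∫ ((b - a) h - I)²`, expanded
  have hvar : 0 ≤ ∫ s in a..b, ((b - a) ^ 2 * h s ^ 2 - 2 * (b - a) * I * h s + I ^ 2) := by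
    refine integral_nonneg hab fun s _ => ?_
    nlinarith [sq_nonneg ((b - a) * h s - I)]
  rw [integral_add ((hint_sq.const_mul _).sub (hint.const_mul _)) intervalIntegrable_const,
    integral_sub (hint_sq.const_mul _) (hint.const_mul _), intervalIntegral.integral_const_mul,
    intervalIntegral.integral_const_mul, intervalIntegral.integral_const, smul_eq_mul] at hvar
  rcases hab.eq_or_lt with rfl | hlt
  · simp [I]
  · nlinarith [sub_pos.2 hlt]

theorem abs_intervalIntegral_mul_le {k f : ℝ → ℝ} {a b C : ℝ} (hab : a ≤ b)
    (hf : IntervalIntegrable f volume a b) (hk : ∀ s ∈ Ioc a b, |k s| ≤ C) :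
    |∫ s in a..b, k s * f s| ≤ C * ∫ s in a..b, |f s| := by
  rw [← intervalIntegral.integral_const_mul, ← Real.norm_eq_abs]
  refine norm_integral_le_of_norm_le hab (ae_of_all _ fun s hs => ?_) (hf.abs.const_mul C)
  rw [Real.norm_eq_abs, abs_mul]
  exact mul_le_mul_of_nonneg_right (hk s hs) (abs_nonneg _)

theorem integral_sub_mul_deriv_deriv {g : ℝ → ℝ} (hg : ContDiff ℝ 2 g) (a b : ℝ) :
    ∫ s in a..b, (b - s) * deriv (deriv g) s = g b - g a - (b - a) * deriv g a := by
  have hg' : ContDiff ℝ 1 (deriv g) := hg.iterate_deriv' 1 1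
  have hF : ∀ s, HasDerivAt (fun s => (b - s) * deriv g s + g s)
      ((b - s) * deriv (deriv g) s) s := fun s => by
    refine ((((hasDerivAt_id' s).const_sub b).fun_mul
      (hg'.differentiable one_ne_zero s).hasDerivAt).fun_add
        (hg.differentiable two_ne_zero s).hasDerivAt).congr_deriv ?_
    ring
  rw [integral_eq_sub_of_hasDerivAt (fun s _ => hF s)
    (((continuous_const.sub continuous_id).mul (hg'.continuous_deriv le_rfl)).intervalIntegrable a b)]
  ring

theorem extrapolation_sub_midpoint_eq {g : ℝ → ℝ} (hg : ContDiff ℝ 2 g) (t τ : ℝ) :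
    (3 / 2) * g t - (1 / 2) * g (t - τ) - g (t + τ / 2) =
      -(3 / 2) * (∫ s in t..(t + τ / 2), (t - s) * deriv (deriv g) s) +
        (1 / 2) * ∫ s in (t - τ)..(t + τ / 2), (t - τ - s) * deriv (deriv g) s := by
  have R₁ := integral_sub_mul_deriv_deriv hg (t + τ / 2) t
  have R₂ := integral_sub_mul_deriv_deriv hg (t + τ / 2) (t - τ)
  rw [integral_symm] at R₁ R₂
  linear_combination (1 / 2) * R₂ - (3 / 2) * R₁

theorem abs_extrapolation_sub_midpoint_le {g : ℝ → ℝ} (hg : ContDiff ℝ 2 g) (t : ℝ) {τ : ℝ}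
    (hτ : 0 ≤ τ) :
    |(3 / 2) * g t - (1 / 2) * g (t - τ) - g (t + τ / 2)| ≤
      3 * τ / 2 * ∫ s in (t - τ)..(t + τ / 2), |deriv (deriv g) s| := by
  rw [extrapolation_sub_midpoint_eq hg]
  set m := t + τ / 2 with hm
  set f := deriv (deriv g)
  have hf : Continuous f := (hg.iterate_deriv' 0 2).continuous
  set J := ∫ s in (t - τ)..m, |f s|
  have hR₁ : |∫ s in t..m, (t - s) * f s| ≤ τ / 2 * J := calc
    _ ≤ τ / 2 * ∫ s in t..m, |f s| :=
      abs_intervalIntegral_mul_le (by linarith) (hf.intervalIntegrable _ _) fun s hs => by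
        rw [abs_sub_comm, abs_of_nonneg (by linarith [hs.1])]; linarith [hs.2]
    _ ≤ τ / 2 * J := by
      gcongr
      exact integral_mono_interval (by linarith) (by linarith) le_rfl
        (ae_of_all _ fun s => abs_nonneg _) (hf.abs.intervalIntegrable _ _)
  have hR₂ : |∫ s in (t - τ)..m, (t - τ - s) * f s| ≤ 3 * τ / 2 * J :=
    abs_intervalIntegral_mul_le (by linarith) (hf.intervalIntegrable _ _) fun s hs => by
      rw [abs_sub_comm, abs_of_nonneg (by linarith [hs.1])]; linarith [hs.2]
  refine (abs_add_le _ _).trans ?_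
  simp only [abs_mul]
  norm_num
  linarith

theorem stmt_10 (g : ℝ → ℝ) (hg : ContDiff ℝ 2 g) (t τ : ℝ) (hτ : 0 < τ) :
    |(3 / 2) * g t - (1 / 2) * g (t - τ) - g (t + τ / 2)| ^ 2 ≤
      4 * τ ^ 3 * ∫ s in (t - τ)..(t + τ), |deriv (deriv g) s| ^ 2 := by
  set f := deriv (deriv g)
  have hf : Continuous f := (hg.iterate_deriv' 0 2).continuous
  set J := ∫ s in (t - τ)..(t + τ / 2), |f s|
  set X := ∫ s in (t - τ)..(t + τ), |f s| ^ 2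
  have hJ : J ^ 2 ≤ 3 * τ / 2 * X := calc
    J ^ 2 ≤ (t + τ / 2 - (t - τ)) * ∫ s in (t - τ)..(t + τ / 2), |f s| ^ 2 :=
      sq_intervalIntegral_le hf.abs (by linarith)
    _ ≤ 3 * τ / 2 * X := by
      rw [show t + τ / 2 - (t - τ) = 3 * τ / 2 by ring]
      gcongr
      exact integral_mono_interval le_rfl (by linarith) (by linarith)
        (ae_of_all _ fun s => sq_nonneg _) ((hf.abs.pow 2).intervalIntegrable _ _)
  have hX : 0 ≤ X := integral_nonneg (by linarith) fun s _ => by positivity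
  calc _ ≤ (3 * τ / 2 * J) ^ 2 :=
        pow_le_pow_left₀ (abs_nonneg _) (abs_extrapolation_sub_midpoint_le hg t hτ.le) 2
    _ ≤ 9 / 4 * τ ^ 2 * (3 * τ / 2 * X) := by
      rw [mul_pow]; gcongr; linarith
    _ ≤ 4 * τ ^ 3 * X := by nlinarith [pow_pos hτ 3]
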